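/- The 1-norm trick: if f : {-1,1}ⁿ → ℝ has degree at most d, then ‖f‖₂ ≤ 3^d ‖f‖₁. -/
import Mathlib


open Finset Function

noncomputable section

/-- Expectation with respect to the uniform measure on the Hamming cube,
encoded as `Fin n → Bool` (`true ↦ 1`, `false ↦ -1`). -/
def expec {n : ℕ} (f : (Fin n → Bool) → ℝ) : ℝ :=
  (∑ x : Fin n → Bool, f x) / 2 ^ n

/-- The character χ_S. -/
def chi {n : ℕ} (S : Finset (Fin n)) (x : Fin n → Bool) : ℝ :=
  ∏ i ∈ S, (if x i then (1 : ℝ) else -1)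

/-- Fourier coefficient f̂(S) = E[f χ_S]. -/
def fcoef {n : ℕ} (f : (Fin n → Bool) → ℝ) (S : Finset (Fin n)) : ℝ :=
  expec (fun x => f x * chi S x)

/-- Influence of coordinate i: probability that flipping coordinate i changes f. -/
def infl {n : ℕ} (f : (Fin n → Bool) → ℝ) (i : Fin n) : ℝ :=
  expec (fun x => if f x ≠ f (Function.update x i (!(x i))) then (1 : ℝ) else 0)

/-- Total influence. -/
def totalInfl {n : ℕ} (f : (Fin n → Bool) → ℝ) : ℝ :=
  ∑ i : Fin n, infl f i

/-- The p-norm ‖f‖_p = (E[|f|^p])^{1/p}. -/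
def pnorm {n : ℕ} (p : ℝ) (f : (Fin n → Bool) → ℝ) : ℝ :=
  (expec (fun x => |f x| ^ p)) ^ (1 / p)

/-- The discrete i-th derivative. -/
def deriv' {n : ℕ} (i : Fin n) (g : (Fin n → Bool) → ℝ) : (Fin n → Bool) → ℝ :=
  fun x => (g (Function.update x i true) - g (Function.update x i false)) / 2

/-- The noise operator T_ρ. -/
def noiseOp {n : ℕ} (ρ : ℝ) (f : (Fin n → Bool) → ℝ) : (Fin n → Bool) → ℝ :=
  fun x => ∑ S : Finset (Fin n), ρ ^ S.card * fcoef f S * chi S x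

end


lemma expec_congr {n : ℕ} {F G : (Fin n → Bool) → ℝ} (h : ∀ x, F x = G x) :
    expec F = expec G := by
  unfold expec; rw [Finset.sum_congr rfl fun x _ => h x]

lemma expec_nonneg {n : ℕ} {F : (Fin n → Bool) → ℝ} (h : ∀ x, 0 ≤ F x) :
    0 ≤ expec F := by
  unfold expec
  apply div_nonneg (Finset.sum_nonneg fun x _ => h x)
  positivity

lemma sum_pi_succ {n : ℕ} (F : (Fin (n + 1) → Bool) → ℝ) :
    ∑ x : Fin (n + 1) → Bool, F x
      = ∑ y : Fin n → Bool, (F (Fin.cons true y) + F (Fin.cons false y)) := by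
  classical
  let e : Bool × (Fin n → Bool) ≃ (Fin (n + 1) → Bool) :=
    { toFun := fun p => Fin.cons p.1 p.2
      invFun := fun x => (x 0, Fin.tail x)
      left_inv := fun p => by simp [Fin.tail_cons]
      right_inv := fun x => Fin.cons_self_tail x }
  have h1 : ∑ x : Fin (n + 1) → Bool, F x
      = ∑ p : Bool × (Fin n → Bool), F (Fin.cons p.1 p.2) := (Equiv.sum_comp e F).symm
  rw [h1, Fintype.sum_prod_type, Fintype.sum_bool, ← Finset.sum_add_distrib]

lemma expec_cons {n : ℕ} (F : (Fin (n + 1) → Bool) → ℝ) :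
    expec F = expec (fun y => (F (Fin.cons true y) + F (Fin.cons false y)) / 2) := by
  unfold expec
  rw [sum_pi_succ, Finset.sum_div, pow_succ]
  rw [Finset.sum_div]
  congr 1; funext y; ring

lemma chi_map {n : ℕ} (S : Finset (Fin n)) (b : Bool) (y : Fin n → Bool) :
    chi (S.map (Fin.succEmb n)) (Fin.cons b y) = chi S y := by
  unfold chi
  rw [Finset.prod_map]
  exact Finset.prod_congr rfl fun i _ => by simp [Fin.succEmb, Fin.cons_succ]

lemma zero_notMem_map {n : ℕ} (S : Finset (Fin n)) :
    (0 : Fin (n + 1)) ∉ S.map (Fin.succEmb n) := by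
  simp [Fin.succEmb, Fin.succ_ne_zero, eq_comm]

lemma chi_insert {n : ℕ} (S : Finset (Fin n)) (b : Bool) (y : Fin n → Bool) :
    chi (insert 0 (S.map (Fin.succEmb n))) (Fin.cons b y)
      = (if b then (1 : ℝ) else -1) * chi S y := by
  have hm := chi_map S b y
  unfold chi at hm ⊢
  rw [Finset.prod_insert (zero_notMem_map S), Fin.cons_zero, hm]

lemma fcoef_g {n : ℕ} (f : (Fin (n + 1) → Bool) → ℝ) (S : Finset (Fin n)) :
    fcoef (fun y => (f (Fin.cons true y) + f (Fin.cons false y)) / 2) S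
      = fcoef f (S.map (Fin.succEmb n)) := by
  unfold fcoef
  rw [expec_cons (F := fun x => f x * chi (S.map (Fin.succEmb n)) x)]
  exact (expec_congr fun y => by rw [chi_map, chi_map]; ring).symm

lemma fcoef_h {n : ℕ} (f : (Fin (n + 1) → Bool) → ℝ) (S : Finset (Fin n)) :
    fcoef (fun y => (f (Fin.cons true y) - f (Fin.cons false y)) / 2) S
      = fcoef f (insert 0 (S.map (Fin.succEmb n))) := by
  unfold fcoef
  rw [expec_cons (F := fun x => f x * chi (insert 0 (S.map (Fin.succEmb n))) x)]
  exact (expec_congr fun y => by rw [chi_insert, chi_insert]; simp; ring).symm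

lemma eq_zero_of_fcoef : ∀ (n : ℕ) (f : (Fin n → Bool) → ℝ),
    (∀ S, fcoef f S = 0) → ∀ x, f x = 0 := by
  intro n
  induction n with
  | zero =>
    intro f hf x
    have h := hf ∅
    unfold fcoef expec at h
    have hu : (Finset.univ : Finset (Fin 0 → Bool)) = {x} := by
      ext z
      simp only [Finset.mem_univ, Finset.mem_singleton, true_iff]
      exact funext fun i => i.elim0
    rw [hu, Finset.sum_singleton] at h
    simpa [chi] using h
  | succ n ih =>
    intro f hf x
    set g : (Fin n → Bool) → ℝ := fun y => (f (Fin.cons true y) + f (Fin.cons false y)) / 2 with hgdef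
    set h : (Fin n → Bool) → ℝ := fun y => (f (Fin.cons true y) - f (Fin.cons false y)) / 2 with hhdef
    have hg := ih g (fun S => by rw [hgdef, fcoef_g]; exact hf _)
    have hh := ih h (fun S => by rw [hhdef, fcoef_h]; exact hf _)
    have hx : x = Fin.cons (x 0) (Fin.tail x) := (Fin.cons_self_tail x).symm
    rw [hx]
    have h1 := hg (Fin.tail x)
    have h2 := hh (Fin.tail x)
    rw [hgdef] at h1; rw [hhdef] at h2
    cases x 0 <;> simp at h1 h2 ⊢ <;> linarith

lemma expec_fin_zero (F : (Fin 0 → Bool) → ℝ) : expec F = F default := by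
  unfold expec
  have hu : (Finset.univ : Finset (Fin 0 → Bool)) = {default} := by
    ext z
    simp only [Finset.mem_univ, Finset.mem_singleton, true_iff]
    exact funext fun i => i.elim0
  rw [hu, Finset.sum_singleton]
  simp

lemma expec_cs {n : ℕ} (F G : (Fin n → Bool) → ℝ) :
    (expec (fun x => F x * G x)) ^ 2
      ≤ expec (fun x => F x ^ 2) * expec (fun x => G x ^ 2) := by
  unfold expec
  rw [div_pow, div_mul_div_comm, pow_two ((2 : ℝ) ^ n)]
  gcongr
  exact Finset.sum_mul_sq_le_sq_mul_sq _ _ _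

lemma bonami : ∀ (n d : ℕ) (f : (Fin n → Bool) → ℝ),
    (∀ S : Finset (Fin n), d < S.card → fcoef f S = 0) →
    expec (fun x => f x ^ 4) ≤ 9 ^ d * (expec fun x => f x ^ 2) ^ 2 := by
  intro n
  induction n with
  | zero =>
    intro d f _
    have h4 : expec (fun x : Fin 0 → Bool => f x ^ 4) = f default ^ 4 := expec_fin_zero _
    have h2 : expec (fun x : Fin 0 → Bool => f x ^ 2) = f default ^ 2 := expec_fin_zero _
    rw [h4, h2]
    have h9 : (1 : ℝ) ≤ 9 ^ d := one_le_pow₀ (by norm_num)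
    nlinarith [sq_nonneg (f default ^ 2)]
  | succ n ih =>
    intro d f hdeg
    set g : (Fin n → Bool) → ℝ := fun y => (f (Fin.cons true y) + f (Fin.cons false y)) / 2
      with hgdef
    set h : (Fin n → Bool) → ℝ := fun y => (f (Fin.cons true y) - f (Fin.cons false y)) / 2
      with hhdef
    have hg : ∀ S : Finset (Fin n), d < S.card → fcoef g S = 0 := by
      intro S hS
      rw [hgdef, fcoef_g]
      exact hdeg _ (by rwa [Finset.card_map])
    have hh0 : ∀ S : Finset (Fin n), d ≤ S.card → fcoef h S = 0 := by
      intro S hS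
      rw [hhdef, fcoef_h]
      apply hdeg
      rw [Finset.card_insert_of_notMem (zero_notMem_map S), Finset.card_map]
      omega
    have hf4 : expec (fun x => f x ^ 4)
        = expec (fun y => g y ^ 4 + 6 * (g y ^ 2 * h y ^ 2) + h y ^ 4) := by
      rw [expec_cons (F := fun x => f x ^ 4)]
      exact expec_congr fun y => by rw [hgdef, hhdef]; ring
    have hf2 : expec (fun x => f x ^ 2) = expec (fun y => g y ^ 2 + h y ^ 2) := by
      rw [expec_cons (F := fun x => f x ^ 2)]
      exact expec_congr fun y => by rw [hgdef, hhdef]; ring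
    have hsplit4 : expec (fun y => g y ^ 4 + 6 * (g y ^ 2 * h y ^ 2) + h y ^ 4)
        = expec (fun y => g y ^ 4) + 6 * expec (fun y => g y ^ 2 * h y ^ 2)
          + expec (fun y => h y ^ 4) := by
      unfold expec
      rw [Finset.sum_add_distrib, Finset.sum_add_distrib, ← Finset.mul_sum]
      ring
    have hsplit2 : expec (fun y => g y ^ 2 + h y ^ 2)
        = expec (fun y => g y ^ 2) + expec (fun y => h y ^ 2) := by
      unfold expec
      rw [Finset.sum_add_distrib]
      ring
    have hBg := ih d g hg
    have hcs : (expec (fun y => g y ^ 2 * h y ^ 2)) ^ 2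
        ≤ expec (fun y => g y ^ 4) * expec (fun y => h y ^ 4) := by
      have := expec_cs (fun y => g y ^ 2) (fun y => h y ^ 2)
      calc (expec (fun y => g y ^ 2 * h y ^ 2)) ^ 2
          ≤ expec (fun y => (g y ^ 2) ^ 2) * expec (fun y => (h y ^ 2) ^ 2) := this
        _ = expec (fun y => g y ^ 4) * expec (fun y => h y ^ 4) := by
            rw [expec_congr (F := fun y => (g y ^ 2) ^ 2) (G := fun y => g y ^ 4)
                  fun y => by ring,
                expec_congr (F := fun y => (h y ^ 2) ^ 2) (G := fun y => h y ^ 4)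
                  fun y => by ring]
    have hcnn : 0 ≤ expec (fun y => g y ^ 2 * h y ^ 2) :=
      expec_nonneg fun y => by positivity
    have hannn : 0 ≤ expec (fun y => g y ^ 2) := expec_nonneg fun y => by positivity
    have hbnn : 0 ≤ expec (fun y => h y ^ 2) := expec_nonneg fun y => by positivity
    have hPnn : 0 ≤ expec (fun y => g y ^ 4) := expec_nonneg fun y => by positivity
    have hQnn : 0 ≤ expec (fun y => h y ^ 4) := expec_nonneg fun y => by positivity
    rw [hf4, hf2, hsplit4, hsplit2]
    set a := expec (fun y => g y ^ 2)
    set b := expec (fun y => h y ^ 2)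
    set c := expec (fun y => g y ^ 2 * h y ^ 2)
    set P := expec (fun y => g y ^ 4)
    set Q := expec (fun y => h y ^ 4)
    cases d with
    | zero =>
      -- h is identically zero
      have hz : ∀ y, h y = 0 := eq_zero_of_fcoef n h fun S => hh0 S (Nat.zero_le _)
      have hb : b = 0 := by
        rw [show b = expec (fun y => h y ^ 2) from rfl,
          expec_congr (G := fun _ => (0:ℝ)) fun y => by rw [hz y]; ring]
        unfold expec; simp
      have hQ : Q = 0 := by
        rw [show Q = expec (fun y => h y ^ 4) from rfl,
          expec_congr (G := fun _ => (0:ℝ)) fun y => by rw [hz y]; ring]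
        unfold expec; simp
      have hc : c = 0 := by
        rw [show c = expec (fun y => g y ^ 2 * h y ^ 2) from rfl,
          expec_congr (G := fun _ => (0:ℝ)) fun y => by rw [hz y]; ring]
        unfold expec; simp
      rw [hb, hQ, hc]
      simpa using hBg
    | succ e =>
      have hBh := ih e h fun S hS => hh0 S (by omega)
      set t := (3 : ℝ) ^ e with htdef
      have ht : 0 < t := by positivity
      have h9e : (9 : ℝ) ^ e = t ^ 2 := by
        rw [htdef, ← pow_mul, mul_comm, pow_mul]; norm_num
      have h9e1 : (9 : ℝ) ^ (e + 1) = 9 * t ^ 2 := by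
        rw [pow_succ, h9e]; ring
      rw [h9e1]
      rw [h9e1] at hBg
      rw [h9e] at hBh
      -- c ≤ 3 t² a b
      have hcle : c ≤ 3 * t ^ 2 * (a * b) := by
        have h1 : c ^ 2 ≤ (3 * t ^ 2 * (a * b)) ^ 2 := by
          calc c ^ 2 ≤ P * Q := hcs
            _ ≤ (9 * t ^ 2 * a ^ 2) * (t ^ 2 * b ^ 2) := by
                apply mul_le_mul hBg hBh hQnn (by positivity)
            _ = (3 * t ^ 2 * (a * b)) ^ 2 := by ring
        nlinarith [mul_nonneg (mul_nonneg hannn hbnn) (sq_nonneg t)]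
      have hP : P ≤ 9 * t ^ 2 * a ^ 2 := hBg
      have hQ : Q ≤ t ^ 2 * b ^ 2 := hBh
      nlinarith [sq_nonneg t, mul_nonneg hannn hbnn, sq_nonneg (a*b), sq_nonneg b,
        mul_nonneg (sq_nonneg t) (sq_nonneg b)]

/-- The 1-norm trick: for degree-d functions, ‖f‖₂ ≤ 3^d ‖f‖₁. -/
theorem one_norm_trick {n d : ℕ} (f : (Fin n → Bool) → ℝ)
    (hdeg : ∀ S : Finset (Fin n), d < S.card → fcoef f S = 0) :
    pnorm 2 f ≤ 3 ^ d * pnorm 1 f := by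
  classical
  set A := expec (fun x => |f x|) with hA
  set B := expec (fun x => f x ^ 2) with hB
  set C := expec (fun x => f x ^ 4) with hCdef
  set D := expec (fun x => |f x| ^ 3) with hDdef
  have hAnn : 0 ≤ A := expec_nonneg fun x => abs_nonneg _
  have hBnn : 0 ≤ B := expec_nonneg fun x => by positivity
  have hCnn : 0 ≤ C := expec_nonneg fun x => by positivity
  have hDnn : 0 ≤ D := expec_nonneg fun x => by positivity
  have hC : C ≤ 9 ^ d * B ^ 2 := bonami n d f hdeg
  have hcs1 : B ^ 2 ≤ A * D := by
    have h0 := expec_cs (fun x => Real.sqrt |f x|) (fun x => |f x| * Real.sqrt |f x|)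
    have e1 : expec (fun x => Real.sqrt |f x| * (|f x| * Real.sqrt |f x|)) = B := by
      rw [hB]
      apply expec_congr
      intro x
      rw [show Real.sqrt |f x| * (|f x| * Real.sqrt |f x|)
          = Real.sqrt |f x| * Real.sqrt |f x| * |f x| by ring,
        Real.mul_self_sqrt (abs_nonneg _), ← sq_abs]
      ring
    have e2 : expec (fun x => Real.sqrt |f x| ^ 2) = A := by
      rw [hA]
      exact expec_congr fun x => Real.sq_sqrt (abs_nonneg _)
    have e3 : expec (fun x => (|f x| * Real.sqrt |f x|) ^ 2) = D := by
      rw [hDdef]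
      apply expec_congr
      intro x
      rw [mul_pow, Real.sq_sqrt (abs_nonneg _)]
      ring
    rw [e1, e2, e3] at h0
    exact h0
  have hcs2 : D ^ 2 ≤ B * C := by
    have h0 := expec_cs (fun x => |f x|) (fun x => f x ^ 2)
    have e1 : expec (fun x => |f x| * f x ^ 2) = D := by
      rw [hDdef]
      apply expec_congr
      intro x
      rw [← sq_abs]
      ring
    have e2 : expec (fun x => |f x| ^ 2) = B := by
      rw [hB]
      exact expec_congr fun x => sq_abs _
    have e3 : expec (fun x => (f x ^ 2) ^ 2) = C := by
      rw [hCdef]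
      exact expec_congr fun x => by ring
    rw [e1, e2, e3] at h0
    exact h0
  have h9nn : (0:ℝ) ≤ 9 ^ d := by positivity
  have key : B ≤ 9 ^ d * A ^ 2 := by
    rcases hBnn.eq_or_lt with h0 | hBpos
    · rw [← h0]
      positivity
    · have h1 : B ^ 4 ≤ (A * D) ^ 2 := by
        calc B ^ 4 = (B ^ 2) ^ 2 := by ring
          _ ≤ (A * D) ^ 2 := pow_le_pow_left₀ (sq_nonneg B) hcs1 2
      have h3 : A ^ 2 * D ^ 2 ≤ A ^ 2 * (B * C) :=
        mul_le_mul_of_nonneg_left hcs2 (sq_nonneg A)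
      have h4 : A ^ 2 * (B * C) ≤ A ^ 2 * (B * (9 ^ d * B ^ 2)) :=
        mul_le_mul_of_nonneg_left (mul_le_mul_of_nonneg_left hC hBnn) (sq_nonneg A)
      nlinarith [pow_pos hBpos 3]
  have hp1 : pnorm 1 f = A := by
    unfold pnorm
    rw [show expec (fun x => |f x| ^ (1:ℝ)) = A from expec_congr fun x => Real.rpow_one _,
      show (1 / (1:ℝ)) = 1 by norm_num, Real.rpow_one]
  have hp2 : pnorm 2 f = Real.sqrt B := by
    unfold pnorm
    rw [show expec (fun x => |f x| ^ (2:ℝ)) = B from expec_congr fun x => by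
        rw [show (2:ℝ) = ((2:ℕ):ℝ) by norm_num, Real.rpow_natCast]
        exact sq_abs _,
      ← Real.sqrt_eq_rpow]
  rw [hp1, hp2]
  have h3sq : ((3:ℝ) ^ d) ^ 2 = 9 ^ d := by
    rw [← pow_mul, mul_comm, pow_mul]
    norm_num
  calc Real.sqrt B ≤ Real.sqrt ((3 ^ d * A) ^ 2) :=
        Real.sqrt_le_sqrt (by nlinarith [key, h3sq])
    _ = 3 ^ d * A := Real.sqrt_sq (by positivity)
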